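/- Let β ≥ γ ≥ 0 with β + γ > 1 and γ < 1. Then there exists a constant C = C(β,γ) > 0 such that for all k₁, k₂ ∈ ℝ, ∫_ℝ ⟨τ − k₁⟩^{−β} |τ − k₂|^{−γ} dτ ≤ C ⟨k₁ − k₂⟩^{−γ} φ_β(k₁ − k₂), where φ_β(k) = 1 if β > 1, φ_β(k) = log(1 + ⟨k⟩) if β = 1, and φ_β(k) = ⟨k⟩^{1−β} if β < 1. -/

import Mathlib

open MeasureTheory Real
open scoped ENNReal

/-- Japanese bracket `⟨x⟩ = (1 + x²)^{1/2}`. -/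
noncomputable def jap (x : ℝ) : ℝ := Real.sqrt (1 + x ^ 2)

/-- The function `φ_β` from the calculus lemma. -/
noncomputable def phiβ (β k : ℝ) : ℝ :=
  if 1 < β then 1
  else if β = 1 then Real.log (1 + jap k)
  else jap k ^ (1 - β)

/-!
Translate so that `k₂ = 0`, and write `k = k₁ - k₂`, `K = ⟨k⟩`. Split the line into
three regions.
* Where `|σ| ≤ K/2`, one has `⟨σ - k⟩ ≥ K/2`, and `|σ|^{-γ}` is integrable near `0`
  since `γ < 1`.
* Where `|σ| > K/2` and `|σ - k| ≤ K`, one has `|σ|^{-γ} ≲ K^{-γ}`, and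
  `∫_{|u| ≤ K} ⟨u⟩^{-β} ≲ φ_β(k)`.
* Where `|σ| > K/2` and `|σ - k| > K`, one has `⟨σ - k⟩ ≥ |σ|/2`, and `|σ|^{-β-γ}` is
  integrable at infinity since `β + γ > 1`.
The first and last regions contribute `K^{1-β-γ} = K^{-γ} K^{1-β}`, and `K^{1-β} ≲ φ_β(k)`
in all three cases of `φ_β`.
-/

open Set

lemma jap_nonneg (x : ℝ) : 0 ≤ jap x := Real.sqrt_nonneg _

lemma one_le_jap (x : ℝ) : 1 ≤ jap x :=
  Real.one_le_sqrt.2 (by nlinarith)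

lemma jap_pos (x : ℝ) : 0 < jap x := one_pos.trans_le (one_le_jap x)

lemma sq_jap (x : ℝ) : jap x ^ 2 = 1 + x ^ 2 := Real.sq_sqrt (by positivity)

lemma abs_le_jap (x : ℝ) : |x| ≤ jap x :=
  Real.abs_le_sqrt (by nlinarith)

lemma jap_abs (x : ℝ) : jap |x| = jap x := by simp [jap]

lemma one_add_abs_le_two_mul_jap (x : ℝ) : 1 + |x| ≤ 2 * jap x := by
  linarith [one_le_jap x, abs_le_jap x]

lemma half_jap_le_jap_sub {σ k : ℝ} (h : |σ| ≤ jap k / 2) : jap k / 2 ≤ jap (σ - k) := by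
  have hσ : σ ^ 2 ≤ (jap k / 2) ^ 2 := by
    rw [← sq_abs]; exact pow_le_pow_left₀ (abs_nonneg σ) h 2
  nlinarith [sq_jap k, sq_jap (σ - k), jap_nonneg (σ - k), jap_nonneg k,
    sq_nonneg (2 * σ - k), sq_nonneg (jap (σ - k) + jap k / 2)]

lemma abs_le_two_mul_jap_sub {σ k : ℝ} (h : jap k < |σ - k|) : |σ| ≤ 2 * jap (σ - k) := by
  have := abs_sub_abs_le_abs_sub σ k
  linarith [abs_le_jap k, abs_le_jap (σ - k)]

lemma half_rpow_neg {x : ℝ} (hx : 0 ≤ x) (q : ℝ) : (x / 2) ^ (-q) = 2 ^ q * x ^ (-q) := by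
  rw [Real.div_rpow hx zero_le_two, Real.rpow_neg zero_le_two, div_inv_eq_mul, mul_comm]

lemma setLIntegral_abs_preimage_le (f : ℝ → ℝ≥0∞) {s : Set ℝ} (hs : MeasurableSet s) :
    ∫⁻ x in abs ⁻¹' s, f |x| ≤ 2 * ∫⁻ x in s ∩ Ici 0, f x := by
  have hcover : abs ⁻¹' s ⊆ (s ∩ Ici 0) ∪ Neg.neg ⁻¹' (s ∩ Ici 0) := by
    intro x hx
    rcases le_total 0 x with h | h
    · exact Or.inl ⟨by simpa [abs_of_nonneg h] using hx, h⟩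
    · exact Or.inr ⟨by simpa [abs_of_nonpos h] using hx, neg_nonneg.2 h⟩
  have hpos : ∫⁻ x in s ∩ Ici 0, f |x| = ∫⁻ x in s ∩ Ici 0, f x :=
    setLIntegral_congr_fun (hs.inter measurableSet_Ici) fun x hx => by rw [abs_of_nonneg hx.2]
  have hneg : ∫⁻ x in Neg.neg ⁻¹' (s ∩ Ici 0), f |x| = ∫⁻ x in s ∩ Ici 0, f |x| := by
    simpa only [abs_neg] using (Measure.measurePreserving_neg (volume : Measure ℝ)
      ).setLIntegral_comp_preimage_emb (Homeomorph.neg ℝ).measurableEmbedding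
        (fun x => f |x|) (s ∩ Ici 0)
  calc ∫⁻ x in abs ⁻¹' s, f |x|
      ≤ ∫⁻ x in (s ∩ Ici 0) ∪ Neg.neg ⁻¹' (s ∩ Ici 0), f |x| :=
        lintegral_mono_set hcover
    _ ≤ _ := lintegral_union_le _ _ _
    _ = 2 * ∫⁻ x in s ∩ Ici 0, f x := by rw [hneg, hpos, two_mul]

lemma setLIntegral_Icc_ofReal {f : ℝ → ℝ} {a b : ℝ} (hab : a ≤ b)
    (hf : IntervalIntegrable f volume a b) (hf0 : ∀ x ∈ Icc a b, 0 ≤ f x) :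
    ∫⁻ x in Icc a b, ENNReal.ofReal (f x) = ENNReal.ofReal (∫ x in a..b, f x) := by
  rw [intervalIntegral.integral_of_le hab, ← setLIntegral_congr Ioc_ae_eq_Icc,
    ofReal_integral_eq_lintegral_ofReal ((intervalIntegrable_iff_integrableOn_Ioc_of_le hab).1 hf)]
  filter_upwards [ae_restrict_mem measurableSet_Ioc] with x hx
  exact hf0 x (Ioc_subset_Icc_self hx)

lemma setLIntegral_Icc_rpow_neg {γ R : ℝ} (hγ : γ < 1) (hR : 0 ≤ R) :
    ∫⁻ x in Icc 0 R, ENNReal.ofReal (x ^ (-γ)) = ENNReal.ofReal (R ^ (1 - γ) / (1 - γ)) := by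
  rw [setLIntegral_Icc_ofReal hR (intervalIntegral.intervalIntegrable_rpow' (by linarith))
    fun x hx => Real.rpow_nonneg hx.1 _, integral_rpow (Or.inl (by linarith)),
    Real.zero_rpow (by linarith), neg_add_eq_sub, sub_zero]

lemma setLIntegral_Ioi_rpow_neg {p r : ℝ} (hp : 1 < p) (hr : 0 < r) :
    ∫⁻ x in Ioi r, ENNReal.ofReal (x ^ (-p)) = ENNReal.ofReal (r ^ (1 - p) / (p - 1)) := by
  have hp' : -p < -1 := by linarith
  rw [← ofReal_integral_eq_lintegral_ofReal (integrableOn_Ioi_rpow_of_lt hp' hr),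
    integral_Ioi_rpow_of_lt hp' hr, neg_div, ← div_neg, neg_add_eq_sub, neg_sub]
  filter_upwards [ae_restrict_mem measurableSet_Ioi] with x hx
  exact Real.rpow_nonneg (hr.trans hx).le _

lemma phiβ_nonneg (β k : ℝ) : 0 ≤ phiβ β k := by
  unfold phiβ
  split_ifs
  · exact zero_le_one
  · exact Real.log_nonneg (by linarith [jap_nonneg k])
  · exact Real.rpow_nonneg (jap_nonneg k) _

lemma jap_rpow_one_sub_le_phiβ (β k : ℝ) : jap k ^ (1 - β) ≤ phiβ β k / log 2 := by
  have hlog2 : 0 < log 2 := Real.log_pos one_lt_two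
  have hlog2_le : log 2 ≤ 1 := log_two_lt_d9.le.trans (by norm_num)
  have hK := one_le_jap k
  rw [le_div_iff₀ hlog2]
  unfold phiβ
  split_ifs with h1 h2
  · exact mul_le_one₀ (Real.rpow_le_one_of_one_le_of_nonpos hK (by linarith)) hlog2.le hlog2_le
  · rw [h2, sub_self, Real.rpow_zero, one_mul]
    exact Real.log_le_log two_pos (by linarith)
  · exact mul_le_of_le_one_right (Real.rpow_nonneg (jap_nonneg k) _) hlog2_le

lemma intervalIntegral_rpow_neg_le_phiβ (β : ℝ) :
    ∃ C > 0, ∀ k : ℝ, ∫ y in (1:ℝ)..1 + jap k, y ^ (-β) ≤ C * phiβ β k := by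
  have h0 : ∀ k, (0:ℝ) ∉ uIcc 1 (1 + jap k) := fun k =>
    notMem_uIcc_of_lt one_pos (by linarith [jap_nonneg k])
  rcases lt_trichotomy β 1 with hβ | rfl | hβ
  · refine ⟨2 ^ (1 - β) / (1 - β), div_pos (by positivity) (by linarith), fun k => ?_⟩
    have hK := one_le_jap k
    have hpow : (1 + jap k) ^ (1 - β) ≤ 2 ^ (1 - β) * jap k ^ (1 - β) := by
      rw [← Real.mul_rpow zero_le_two (jap_nonneg k)]
      exact Real.rpow_le_rpow (by positivity) (by linarith) (by linarith)
    rw [integral_rpow (Or.inl (by linarith)), Real.one_rpow, neg_add_eq_sub, phiβ,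
      if_neg (by linarith), if_neg hβ.ne, div_mul_eq_mul_div]
    gcongr
    linarith
  · refine ⟨1, one_pos, fun k => ?_⟩
    simp_rw [Real.rpow_neg_one]
    rw [integral_inv (h0 k), div_one, one_mul, phiβ, if_neg (lt_irrefl 1), if_pos rfl]
  · refine ⟨1 / (β - 1), div_pos one_pos (by linarith), fun k => ?_⟩
    have hpow : 0 ≤ (1 + jap k) ^ (1 - β) := Real.rpow_nonneg (by linarith [jap_nonneg k]) _
    rw [integral_rpow (Or.inr ⟨by intro h; linarith, h0 k⟩), Real.one_rpow, neg_add_eq_sub,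
      phiβ, if_pos hβ, mul_one, ← neg_div_neg_eq, neg_sub, neg_sub]
    gcongr
    linarith

lemma setLIntegral_Icc_jap_rpow_neg_le_phiβ {β : ℝ} (hβ : 0 ≤ β) :
    ∃ C > 0, ∀ k : ℝ,
      ∫⁻ u in Icc 0 (jap k), ENNReal.ofReal (jap u ^ (-β)) ≤
        ENNReal.ofReal (C * phiβ β k) := by
  obtain ⟨C, hC, hint⟩ := intervalIntegral_rpow_neg_le_phiβ β
  refine ⟨2 ^ β * C, by positivity, fun k => ?_⟩
  have hcont : ContinuousOn (fun u : ℝ => 2 ^ β * (1 + u) ^ (-β)) (uIcc 0 (jap k)) :=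
    continuousOn_const.mul <| (continuousOn_const.add continuousOn_id).rpow_const fun u hu =>
      Or.inl <| by
        rw [uIcc_of_le (jap_nonneg k)] at hu
        simp only [Pi.add_apply, id]
        linarith [hu.1]
  calc ∫⁻ u in Icc 0 (jap k), ENNReal.ofReal (jap u ^ (-β))
      ≤ ∫⁻ u in Icc 0 (jap k), ENNReal.ofReal (2 ^ β * (1 + u) ^ (-β)) := by
        refine setLIntegral_mono' measurableSet_Icc fun u hu => ENNReal.ofReal_le_ofReal ?_
        have h := one_add_abs_le_two_mul_jap u
        rw [abs_of_nonneg hu.1] at h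
        rw [← half_rpow_neg (by linarith [hu.1])]
        exact Real.rpow_le_rpow_of_nonpos (by linarith [hu.1]) (by linarith) (by linarith)
    _ = ENNReal.ofReal (2 ^ β * ∫ y in (1:ℝ)..1 + jap k, y ^ (-β)) := by
        rw [setLIntegral_Icc_ofReal (jap_nonneg k) hcont.intervalIntegrable
          fun u hu => by have := hu.1; positivity, intervalIntegral.integral_const_mul,
          intervalIntegral.integral_comp_add_left (fun y => y ^ (-β)), add_zero]
    _ ≤ ENNReal.ofReal (2 ^ β * C * phiβ β k) := by
        rw [mul_assoc]
        gcongr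
        exact hint k

lemma half_jap_rpow_le_phiβ (β γ k : ℝ) :
    (jap k / 2) ^ (1 - β - γ) ≤ 2 ^ (β + γ - 1) / log 2 * (jap k ^ (-γ) * phiβ β k) := by
  have hK := jap_pos k
  calc (jap k / 2) ^ (1 - β - γ) = 2 ^ (β + γ - 1) * (jap k ^ (-γ) * jap k ^ (1 - β)) := by
        rw [show 1 - β - γ = -(β + γ - 1) by ring, half_rpow_neg hK.le, ← Real.rpow_add hK]
        ring_nf
    _ ≤ 2 ^ (β + γ - 1) * (jap k ^ (-γ) * (phiβ β k / log 2)) := by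
        gcongr
        exact jap_rpow_one_sub_le_phiβ β k
    _ = 2 ^ (β + γ - 1) / log 2 * (jap k ^ (-γ) * phiβ β k) := by ring

section Regions

variable {β γ : ℝ}

lemma setLIntegral_abs_le_half_jap_le (hβ : 0 ≤ β) (hγ : γ < 1) :
    ∃ C > 0, ∀ k : ℝ, ∫⁻ σ in {σ | |σ| ≤ jap k / 2},
      ENNReal.ofReal (jap (σ - k) ^ (-β) * |σ| ^ (-γ)) ≤
        ENNReal.ofReal (C * jap k ^ (-γ) * phiβ β k) := by
  refine ⟨2 / (1 - γ) * (2 ^ (β + γ - 1) / log 2),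
    mul_pos (div_pos two_pos (by linarith)) (div_pos (by positivity) (Real.log_pos one_lt_two)),
    fun k => ?_⟩
  set r := jap k / 2
  have hr : 0 < r := half_pos (jap_pos k)
  calc ∫⁻ σ in abs ⁻¹' Iic r, ENNReal.ofReal (jap (σ - k) ^ (-β) * |σ| ^ (-γ))
      ≤ ∫⁻ σ in abs ⁻¹' Iic r,
          ENNReal.ofReal (r ^ (-β)) * ENNReal.ofReal (|σ| ^ (-γ)) := by
        refine setLIntegral_mono' (measurableSet_Iic.preimage continuous_abs.measurable)
          fun σ hσ => ?_
        rw [← ENNReal.ofReal_mul (by positivity)]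
        refine ENNReal.ofReal_le_ofReal (mul_le_mul_of_nonneg_right ?_ (by positivity))
        exact Real.rpow_le_rpow_of_nonpos hr (half_jap_le_jap_sub hσ) (by linarith)
    _ = ENNReal.ofReal (r ^ (-β)) * ∫⁻ σ in abs ⁻¹' Iic r, ENNReal.ofReal (|σ| ^ (-γ)) :=
        lintegral_const_mul' _ _ ENNReal.ofReal_ne_top
    _ ≤ ENNReal.ofReal (r ^ (-β)) * (2 * ENNReal.ofReal (r ^ (1 - γ) / (1 - γ))) := by
        gcongr
        refine (setLIntegral_abs_preimage_le (fun x => ENNReal.ofReal (x ^ (-γ)))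
          measurableSet_Iic).trans_eq ?_
        rw [Iic_inter_Ici, setLIntegral_Icc_rpow_neg hγ hr.le]
    _ = ENNReal.ofReal (2 / (1 - γ) * r ^ (1 - β - γ)) := by
        rw [← ENNReal.ofReal_ofNat 2, ← ENNReal.ofReal_mul zero_le_two,
          ← ENNReal.ofReal_mul (by positivity), show 1 - β - γ = -β + (1 - γ) by ring,
          Real.rpow_add hr]
        ring_nf
    _ ≤ ENNReal.ofReal
          (2 / (1 - γ) * (2 ^ (β + γ - 1) / log 2) * jap k ^ (-γ) * phiβ β k) := by
        rw [mul_assoc _ (jap k ^ (-γ)), mul_assoc (2 / (1 - γ))]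
        have : 0 < 1 - γ := by linarith
        gcongr
        exact half_jap_rpow_le_phiβ β γ k

lemma setLIntegral_abs_sub_le_jap_le (hβ : 0 ≤ β) (hγ : 0 ≤ γ) :
    ∃ C > 0, ∀ k : ℝ, ∫⁻ σ in {σ | jap k / 2 < |σ| ∧ |σ - k| ≤ jap k},
      ENNReal.ofReal (jap (σ - k) ^ (-β) * |σ| ^ (-γ)) ≤
        ENNReal.ofReal (C * jap k ^ (-γ) * phiβ β k) := by
  obtain ⟨C, hC, hjap⟩ := setLIntegral_Icc_jap_rpow_neg_le_phiβ hβ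
  refine ⟨2 ^ γ * (2 * C), by positivity, fun k => ?_⟩
  set r := jap k / 2
  have hr : 0 < r := half_pos (jap_pos k)
  have hmeas : MeasurableSet {σ : ℝ | r < |σ| ∧ |σ - k| ≤ jap k} :=
    (measurableSet_lt measurable_const continuous_abs.measurable).inter
      (measurableSet_le (continuous_abs.measurable.comp (measurable_sub_const k)) measurable_const)
  calc ∫⁻ σ in {σ | r < |σ| ∧ |σ - k| ≤ jap k},
        ENNReal.ofReal (jap (σ - k) ^ (-β) * |σ| ^ (-γ))
      ≤ ∫⁻ σ in {σ | r < |σ| ∧ |σ - k| ≤ jap k},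
          ENNReal.ofReal (r ^ (-γ)) * ENNReal.ofReal (jap |σ - k| ^ (-β)) := by
        refine setLIntegral_mono' hmeas fun σ hσ => ?_
        rw [jap_abs, ← ENNReal.ofReal_mul (by positivity), mul_comm (r ^ (-γ))]
        refine ENNReal.ofReal_le_ofReal
          (mul_le_mul_of_nonneg_left ?_ (Real.rpow_nonneg (jap_nonneg _) _))
        exact Real.rpow_le_rpow_of_nonpos hr hσ.1.le (by linarith)
    _ ≤ ENNReal.ofReal (r ^ (-γ)) * ∫⁻ σ in (· - k) ⁻¹' (abs ⁻¹' Iic (jap k)),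
          ENNReal.ofReal (jap |σ - k| ^ (-β)) := by
        rw [lintegral_const_mul' _ _ ENNReal.ofReal_ne_top]
        gcongr
        exact fun σ hσ => hσ.2
    _ = ENNReal.ofReal (r ^ (-γ)) *
          ∫⁻ u in abs ⁻¹' Iic (jap k), ENNReal.ofReal (jap |u| ^ (-β)) := by
        rw [(measurePreserving_sub_right volume k).setLIntegral_comp_preimage_emb
          (measurableEmbedding_subRight k) (fun u => ENNReal.ofReal (jap |u| ^ (-β)))]
    _ ≤ ENNReal.ofReal (r ^ (-γ)) * (2 * ENNReal.ofReal (C * phiβ β k)) := by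
        gcongr
        refine (setLIntegral_abs_preimage_le (fun u => ENNReal.ofReal (jap u ^ (-β)))
          measurableSet_Iic).trans ?_
        rw [Iic_inter_Ici]
        gcongr
        exact hjap k
    _ = ENNReal.ofReal (2 ^ γ * (2 * C) * jap k ^ (-γ) * phiβ β k) := by
        rw [← ENNReal.ofReal_ofNat 2, ← ENNReal.ofReal_mul zero_le_two,
          ← ENNReal.ofReal_mul (by positivity), half_rpow_neg (jap_nonneg k)]
        ring_nf

lemma setLIntegral_jap_lt_abs_sub_le (hβ : 0 ≤ β) (hβγ : 1 < β + γ) :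
    ∃ C > 0, ∀ k : ℝ, ∫⁻ σ in {σ | jap k / 2 < |σ| ∧ jap k < |σ - k|},
      ENNReal.ofReal (jap (σ - k) ^ (-β) * |σ| ^ (-γ)) ≤
        ENNReal.ofReal (C * jap k ^ (-γ) * phiβ β k) := by
  have hβγ' : 0 < β + γ - 1 := by linarith
  refine ⟨2 ^ β * 2 / (β + γ - 1) * (2 ^ (β + γ - 1) / log 2),
    mul_pos (by positivity) (div_pos (by positivity) (Real.log_pos one_lt_two)), fun k => ?_⟩
  set r := jap k / 2
  have hr : 0 < r := half_pos (jap_pos k)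
  have hmeas : MeasurableSet {σ : ℝ | r < |σ| ∧ jap k < |σ - k|} :=
    (measurableSet_lt measurable_const continuous_abs.measurable).inter
      (measurableSet_lt measurable_const (continuous_abs.measurable.comp (measurable_sub_const k)))
  calc ∫⁻ σ in {σ | r < |σ| ∧ jap k < |σ - k|},
        ENNReal.ofReal (jap (σ - k) ^ (-β) * |σ| ^ (-γ))
      ≤ ∫⁻ σ in {σ | r < |σ| ∧ jap k < |σ - k|},
          ENNReal.ofReal (2 ^ β) * ENNReal.ofReal (|σ| ^ (-(β + γ))) := by
        refine setLIntegral_mono' hmeas fun σ hσ => ?_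
        have hσ0 : 0 < |σ| := hr.trans hσ.1
        rw [← ENNReal.ofReal_mul (by positivity), neg_add, Real.rpow_add hσ0, ← mul_assoc,
          ← half_rpow_neg hσ0.le]
        refine ENNReal.ofReal_le_ofReal (mul_le_mul_of_nonneg_right ?_ (by positivity))
        exact Real.rpow_le_rpow_of_nonpos (half_pos hσ0)
          (by linarith [abs_le_two_mul_jap_sub hσ.2]) (by linarith)
    _ ≤ ENNReal.ofReal (2 ^ β) *
          ∫⁻ σ in abs ⁻¹' Ioi r, ENNReal.ofReal (|σ| ^ (-(β + γ))) := by
        rw [lintegral_const_mul' _ _ ENNReal.ofReal_ne_top]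
        gcongr
        exact fun σ hσ => hσ.1
    _ ≤ ENNReal.ofReal (2 ^ β) * (2 * ENNReal.ofReal (r ^ (1 - (β + γ)) / (β + γ - 1))) := by
        gcongr
        refine (setLIntegral_abs_preimage_le (fun x => ENNReal.ofReal (x ^ (-(β + γ))))
          measurableSet_Ioi).trans_eq ?_
        rw [inter_eq_left.2 (Ioi_subset_Ici hr.le), setLIntegral_Ioi_rpow_neg (by linarith) hr]
    _ = ENNReal.ofReal (2 ^ β * 2 / (β + γ - 1) * r ^ (1 - β - γ)) := by
        rw [← ENNReal.ofReal_ofNat 2, ← ENNReal.ofReal_mul zero_le_two,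
          ← ENNReal.ofReal_mul (by positivity), sub_add_eq_sub_sub]
        ring_nf
    _ ≤ ENNReal.ofReal (2 ^ β * 2 / (β + γ - 1) * (2 ^ (β + γ - 1) / log 2) * jap k ^ (-γ) *
          phiβ β k) := by
        rw [mul_assoc _ (jap k ^ (-γ)), mul_assoc (2 ^ β * 2 / (β + γ - 1))]
        gcongr
        exact half_jap_rpow_le_phiβ β γ k

end Regions

/-- Calculus lemma, second version: for `β ≥ γ ≥ 0` with `β + γ > 1` and `γ < 1`,
`∫_ℝ ⟨τ − k₁⟩^{−β} |τ − k₂|^{−γ} dτ ≲ ⟨k₁ − k₂⟩^{−γ} φ_β(k₁ − k₂)`. -/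
theorem stmt1 (β γ : ℝ) (hγ : 0 ≤ γ) (hβγ : γ ≤ β) (hsum : 1 < β + γ) (hγ1 : γ < 1) :
    ∃ C > (0:ℝ), ∀ k₁ k₂ : ℝ,
      ∫⁻ τ : ℝ, ENNReal.ofReal (jap (τ - k₁) ^ (-β) * |τ - k₂| ^ (-γ)) ≤
        ENNReal.ofReal (C * jap (k₁ - k₂) ^ (-γ) * phiβ β (k₁ - k₂)) := by
  have hβ : 0 ≤ β := hγ.trans hβγ
  obtain ⟨C₁, hC₁, hnear₀⟩ := setLIntegral_abs_le_half_jap_le hβ hγ1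
  obtain ⟨C₂, hC₂, hnear⟩ := setLIntegral_abs_sub_le_jap_le hβ hγ
  obtain ⟨C₃, hC₃, hfar⟩ := setLIntegral_jap_lt_abs_sub_le (γ := γ) hβ hsum
  refine ⟨C₁ + C₂ + C₃, by positivity, fun k₁ k₂ => ?_⟩
  set k := k₁ - k₂
  set F : ℝ → ℝ≥0∞ := fun σ => ENNReal.ofReal (jap (σ - k) ^ (-β) * |σ| ^ (-γ))
  set A := {σ : ℝ | |σ| ≤ jap k / 2}
  set B := {σ : ℝ | jap k / 2 < |σ| ∧ |σ - k| ≤ jap k}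
  set D := {σ : ℝ | jap k / 2 < |σ| ∧ jap k < |σ - k|}
  have hshift : ∫⁻ τ : ℝ, ENNReal.ofReal (jap (τ - k₁) ^ (-β) * |τ - k₂| ^ (-γ)) =
      ∫⁻ σ, F σ := by
    rw [← lintegral_sub_right_eq_self F k₂]
    simp only [F, k, sub_sub_sub_cancel_right]
  have hcover : univ ⊆ A ∪ B ∪ D := by
    intro σ _
    rcases le_or_gt |σ| (jap k / 2) with h | h
    · exact Or.inl (Or.inl h)
    rcases le_or_gt |σ - k| (jap k) with h' | h'
    · exact Or.inl (Or.inr ⟨h, h'⟩)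
    · exact Or.inr ⟨h, h'⟩
  have hw : 0 ≤ jap k ^ (-γ) * phiβ β k :=
    mul_nonneg (Real.rpow_nonneg (jap_nonneg k) _) (phiβ_nonneg β k)
  calc ∫⁻ τ : ℝ, ENNReal.ofReal (jap (τ - k₁) ^ (-β) * |τ - k₂| ^ (-γ))
      ≤ ∫⁻ σ in A ∪ B ∪ D, F σ := by
        rw [hshift, ← setLIntegral_univ]; exact lintegral_mono_set hcover
    _ ≤ (∫⁻ σ in A, F σ) + (∫⁻ σ in B, F σ) + ∫⁻ σ in D, F σ :=
        (lintegral_union_le _ _ _).trans (add_le_add (lintegral_union_le _ _ _) le_rfl)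
    _ ≤ ENNReal.ofReal (C₁ * jap k ^ (-γ) * phiβ β k) +
          ENNReal.ofReal (C₂ * jap k ^ (-γ) * phiβ β k) +
          ENNReal.ofReal (C₃ * jap k ^ (-γ) * phiβ β k) :=
        add_le_add (add_le_add (hnear₀ k) (hnear k)) (hfar k)
    _ = ENNReal.ofReal ((C₁ + C₂ + C₃) * jap k ^ (-γ) * phiβ β k) := by
        simp only [mul_assoc]
        rw [← ENNReal.ofReal_add (by positivity) (by positivity),
          ← ENNReal.ofReal_add (by positivity) (by positivity), add_mul, add_mul]
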